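/- arXiv:2403.00243 — 7 statements merged into one kernel-verified Lean document; each statement's English description precedes it below -/
import Mathlib

section
/- For every real number x with 0 < x ≤ log(5 + 2·sqrt 6), one has arsinh(1/sinh(x/4)) < 2·arsinh(1/sinh(x/2)). -/
set_option maxHeartbeats 1000000

theorem half_collar_width_lt_two_collar_width (x : ℝ) (hx : 0 < x)
    (hx' : x ≤ Real.log (5 + 2 * Real.sqrt 6)) :
    Real.arsinh (1 / Real.sinh (x / 4)) < 2 * Real.arsinh (1 / Real.sinh (x / 2)) := by
  have h6 : (0:ℝ) < Real.sqrt 6 := Real.sqrt_pos.mpr (by norm_num)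
  have h2 : (0:ℝ) < Real.sqrt 2 := Real.sqrt_pos.mpr (by norm_num)
  have h3 : (0:ℝ) < Real.sqrt 3 := Real.sqrt_pos.mpr (by norm_num)
  have h2sq : Real.sqrt 2 ^ 2 = 2 := Real.sq_sqrt (by norm_num)
  have h3sq : Real.sqrt 3 ^ 2 = 3 := Real.sq_sqrt (by norm_num)
  have h23 : Real.sqrt 2 * Real.sqrt 3 = Real.sqrt 6 := by
    rw [← Real.sqrt_mul (by norm_num)]; norm_num
  have ht : 0 < x / 4 := by linarith
  set s := Real.sinh (x / 4) with hs_def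
  set c := Real.cosh (x / 4) with hc_def
  have hs : 0 < s := Real.sinh_pos_iff.mpr ht
  have hc : 1 < c := Real.one_lt_cosh.mpr (by positivity)
  have hcpos : 0 < c := by linarith
  have hssq : s ^ 2 = c ^ 2 - 1 := Real.sinh_sq (x / 4)
  -- exponential bounds
  have hu : Real.exp x ≤ 5 + 2 * Real.sqrt 6 := by
    have := Real.exp_le_exp.mpr hx'
    rwa [Real.exp_log (by positivity)] at this
  have hexpsq : Real.exp (x / 2) ^ 2 = Real.exp x := by
    rw [sq, ← Real.exp_add]; ring_nf
  have hu2 : Real.exp (x / 2) ≤ Real.sqrt 2 + Real.sqrt 3 := by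
    nlinarith [Real.exp_pos (x / 2), hexpsq, hu, h2sq, h3sq, h23, h2, h3]
  have hu1 : 1 < Real.exp (x / 2) := by
    rw [Real.one_lt_exp_iff]; linarith
  -- cosh (x/2) ≤ sqrt 3
  have hcosh_half : Real.cosh (x / 2) ≤ Real.sqrt 3 := by
    rw [Real.cosh_eq, Real.exp_neg]
    rw [div_le_iff₀ (by norm_num : (0:ℝ) < 2)]
    have hupos := Real.exp_pos (x / 2)
    rw [← sub_nonneg]
    have key : Real.exp (x / 2) * (Real.sqrt 3 * 2 - (Real.exp (x / 2) + (Real.exp (x / 2))⁻¹)) =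
        2 * Real.sqrt 3 * Real.exp (x / 2) - Real.exp (x / 2) ^ 2 - 1 := by
      field_simp; ring
    have hsub : Real.sqrt 3 - Real.sqrt 2 ≤ 1 := by nlinarith [h2sq, h3sq, h2, h3]
    have : 0 ≤ 2 * Real.sqrt 3 * Real.exp (x / 2) - Real.exp (x / 2) ^ 2 - 1 := by
      nlinarith [mul_nonneg (sub_nonneg.2 hu2)
        (by linarith : (0:ℝ) ≤ Real.exp (x / 2) - (Real.sqrt 3 - Real.sqrt 2)), h2sq, h3sq, h23]
    nlinarith [key, this, hupos]
  -- bound on c^2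
  have hcsq : c ^ 2 ≤ (1 + Real.sqrt 3) / 2 := by
    have h2t : x / 2 = 2 * (x / 4) := by ring
    have : Real.cosh (x / 2) = c ^ 2 + s ^ 2 := by
      rw [h2t, Real.cosh_two_mul]
    rw [hssq] at this
    linarith
  -- sinh (x/2)
  have hsinh2 : Real.sinh (x / 2) = 2 * s * c := by
    have h2t : x / 2 = 2 * (x / 4) := by ring
    rw [h2t, Real.sinh_two_mul]
  have hs2pos : 0 < Real.sinh (x / 2) := by rw [hsinh2]; positivity
  set b := 1 / Real.sinh (x / 2) with hb_def
  have hb : 0 < b := by positivity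
  -- rewrite 2 * arsinh b
  have key : 2 * Real.arsinh b = Real.arsinh (2 * b * Real.sqrt (1 + b ^ 2)) := by
    conv_lhs => rw [← Real.arsinh_sinh (2 * Real.arsinh b)]
    rw [Real.sinh_two_mul, Real.sinh_arsinh, Real.cosh_arsinh]
  rw [key, Real.arsinh_lt_arsinh]
  -- key algebraic inequality
  have hsinhsq : Real.sinh (x / 2) ^ 2 = 4 * (c ^ 2 - 1) * c ^ 2 := by
    rw [hsinh2]; linear_combination (4 * c ^ 2) * hssq
  have hb2 : b ^ 2 * (4 * (c ^ 2 - 1) * c ^ 2) = 1 := by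
    rw [← hsinhsq, hb_def]
    field_simp
  have key2 : 4 * (c ^ 2 - 1) ^ 2 * c ^ 2 < 1 := by
    nlinarith [h3sq, hcsq, hc, hcpos, sq_nonneg (c ^ 2 - 1),
      mul_nonneg (sub_nonneg.2 hcsq) (sq_nonneg (c ^ 2 - 1)),
      mul_nonneg (sub_nonneg.2 hcsq) (by nlinarith : (0:ℝ) ≤ c ^ 2 - 1)]
  have hD : 0 < 4 * (c ^ 2 - 1) * c ^ 2 := by nlinarith
  have hlt : c ^ 2 < 1 + b ^ 2 := by nlinarith [hb2, key2, hD]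
  have hsqrt : c < Real.sqrt (1 + b ^ 2) := by
    rw [show c = Real.sqrt (c ^ 2) by rw [Real.sqrt_sq hcpos.le]]
    exact Real.sqrt_lt_sqrt (by positivity) hlt
  have h1s : 1 / s = 2 * b * c := by
    rw [hb_def, hsinh2]; field_simp
  calc 1 / s = 2 * b * c := h1s
    _ < 2 * b * Real.sqrt (1 + b ^ 2) := by
        apply mul_lt_mul_of_pos_left hsqrt (by positivity)
end

section
/- Let m, n be positive integers with m·n ≥ 2, and let x1, x2, x3 > 0 be real numbers. Set E = (sinh(m·x1)/sinh(x1)) · (sinh(n·x2)/sinh(x2)) · (cosh(x3) + cosh(x1)·cosh(x2)) + cosh(m·x1)·cosh(n·x2). Then E > 5, and consequently 2·arcosh(E) > 2·log(5 + 2·sqrt 6). -/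
noncomputable def arcosh (x : ℝ) : ℝ := Real.log (x + Real.sqrt (x ^ 2 - 1))

lemma sinh_nat_mul_ge (k : ℕ) (x : ℝ) (hx : 0 ≤ x) :
    (k : ℝ) * Real.sinh x ≤ Real.sinh (k * x) := by
  induction k with
  | zero => simp
  | succ k ih =>
    have h1 : ((k + 1 : ℕ) : ℝ) * x = (k : ℝ) * x + x := by push_cast; ring
    have hc1 : 1 ≤ Real.cosh x := Real.one_le_cosh x
    have hc2 : 1 ≤ Real.cosh (k * x) := Real.one_le_cosh _
    have hs : 0 ≤ Real.sinh x := Real.sinh_nonneg_iff.2 hx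
    have hs2 : 0 ≤ Real.sinh ((k : ℝ) * x) :=
      Real.sinh_nonneg_iff.2 (by positivity)
    rw [h1, Real.sinh_add]
    push_cast
    nlinarith [ih]

theorem pants_geodesic_length_gt (m n : ℕ) (hm : 0 < m) (hn : 0 < n)
    (hmn : 2 ≤ m * n) (x1 x2 x3 : ℝ) (hx1 : 0 < x1) (hx2 : 0 < x2) (hx3 : 0 < x3) :
    (Real.sinh (m * x1) / Real.sinh x1) * (Real.sinh (n * x2) / Real.sinh x2) *
          (Real.cosh x3 + Real.cosh x1 * Real.cosh x2) +
        Real.cosh (m * x1) * Real.cosh (n * x2) > 5 ∧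
      2 * arcosh ((Real.sinh (m * x1) / Real.sinh x1) * (Real.sinh (n * x2) / Real.sinh x2) *
            (Real.cosh x3 + Real.cosh x1 * Real.cosh x2) +
          Real.cosh (m * x1) * Real.cosh (n * x2)) >
        2 * Real.log (5 + 2 * Real.sqrt 6) := by
  set E := (Real.sinh (m * x1) / Real.sinh x1) * (Real.sinh (n * x2) / Real.sinh x2) *
      (Real.cosh x3 + Real.cosh x1 * Real.cosh x2) +
    Real.cosh (m * x1) * Real.cosh (n * x2) with hE
  have hs1 : 0 < Real.sinh x1 := Real.sinh_pos_iff.2 hx1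
  have hs2 : 0 < Real.sinh x2 := Real.sinh_pos_iff.2 hx2
  have hA : (m : ℝ) ≤ Real.sinh (m * x1) / Real.sinh x1 := by
    rw [le_div_iff₀ hs1]
    exact sinh_nat_mul_ge m x1 hx1.le
  have hB : (n : ℝ) ≤ Real.sinh (n * x2) / Real.sinh x2 := by
    rw [le_div_iff₀ hs2]
    exact sinh_nat_mul_ge n x2 hx2.le
  have hm1 : (1 : ℝ) ≤ m := by exact_mod_cast hm
  have hn1 : (1 : ℝ) ≤ n := by exact_mod_cast hn
  have hmn2 : (2 : ℝ) ≤ (m : ℝ) * n := by exact_mod_cast hmn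
  have hc3 : 1 < Real.cosh x3 := Real.one_lt_cosh.2 hx3.ne'
  have hc1 : 1 ≤ Real.cosh x1 := Real.one_le_cosh x1
  have hc2 : 1 ≤ Real.cosh x2 := Real.one_le_cosh x2
  have hcc1 : 1 ≤ Real.cosh ((m : ℝ) * x1) := Real.one_le_cosh _
  have hcc2 : 1 ≤ Real.cosh ((n : ℝ) * x2) := Real.one_le_cosh _
  have hAB : (2:ℝ) ≤ (Real.sinh (↑m * x1) / Real.sinh x1) * (Real.sinh (↑n * x2) / Real.sinh x2) :=
    le_trans hmn2 (mul_le_mul hA hB (le_trans zero_le_one hn1)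
      (le_trans zero_le_one (le_trans hm1 hA)))
  have hC : (2:ℝ) < Real.cosh x3 + Real.cosh x1 * Real.cosh x2 := by nlinarith
  have hE5 : 5 < E := by
    rw [hE]
    nlinarith [hAB, hC, hcc1, hcc2, mul_le_mul hcc1 hcc2 zero_le_one (le_trans zero_le_one hcc1)]
  refine ⟨hE5, ?_⟩
  have h24 : Real.sqrt 24 = 2 * Real.sqrt 6 := by
    rw [show (24 : ℝ) = 2 ^ 2 * 6 by norm_num, Real.sqrt_mul (by positivity),
      Real.sqrt_sq (by norm_num)]
  have hsqrt6 : 0 < Real.sqrt 6 := Real.sqrt_pos.2 (by norm_num)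
  have hsqlt : Real.sqrt 24 < Real.sqrt (E ^ 2 - 1) := by
    apply Real.sqrt_lt_sqrt (by norm_num)
    nlinarith
  have hlog : Real.log (5 + 2 * Real.sqrt 6) < Real.log (E + Real.sqrt (E ^ 2 - 1)) := by
    apply Real.log_lt_log (by positivity)
    rw [← h24] at *
    linarith
  unfold arcosh
  linarith
end

section
/- For all real numbers C ≥ 1 and t > 0, the function α ↦ arsinh(C · sinh(α·t)) is concave on the interval [0, ∞). -/
open Real

theorem concaveOn_arsinh_mul_sinh (C t : ℝ) (hC : 1 ≤ C) (ht : 0 < t) :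
    ConcaveOn ℝ (Set.Ici (0 : ℝ)) (fun α : ℝ => Real.arsinh (C * Real.sinh (α * t))) := by
  set f : ℝ → ℝ := fun α : ℝ => Real.arsinh (C * Real.sinh (α * t)) with hf
  have hC0 : 0 < C := lt_of_lt_of_le one_pos hC
  have hderiv : ∀ x : ℝ, HasDerivAt f
      ((Real.sqrt (1 + (C * Real.sinh (x * t)) ^ 2))⁻¹ * (C * (Real.cosh (x * t) * t))) x := by
    intro x
    have h1 : HasDerivAt (fun α : ℝ => α * t) t x := by
      simpa using (hasDerivAt_id x).mul_const t
    have h2 : HasDerivAt (fun α : ℝ => C * Real.sinh (α * t))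
        (C * (Real.cosh (x * t) * t)) x := (h1.sinh.const_mul C)
    exact (Real.hasDerivAt_arsinh _).comp x h2
  have hA : ∀ x : ℝ, (0:ℝ) < 1 + (C * Real.sinh (x * t)) ^ 2 := fun x => by positivity
  have hanti : AntitoneOn (deriv f) (interior (Set.Ici (0:ℝ))) := by
    rw [interior_Ici]
    intro x hx y hy hxy
    rw [(hderiv x).deriv, (hderiv y).deriv]
    set sx := Real.sinh (x * t) with hsx
    set sy := Real.sinh (y * t) with hsy
    have hsx0 : 0 ≤ sx := by
      have hx0 : (0:ℝ) ≤ x := (Set.mem_Ioi.1 hx).le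
      have : Real.sinh 0 ≤ Real.sinh (x * t) :=
        Real.sinh_le_sinh.2 (mul_nonneg hx0 ht.le)
      rwa [Real.sinh_zero] at this
    have hsxy : sx ≤ sy := Real.sinh_le_sinh.2 (by nlinarith [Set.mem_Ioi.1 hx])
    have hsq : sx ^ 2 ≤ sy ^ 2 := by nlinarith
    have hcx : Real.cosh (x * t) ^ 2 = 1 + sx ^ 2 := by
      rw [Real.cosh_sq']
    have hcy : Real.cosh (y * t) ^ 2 = 1 + sy ^ 2 := by
      rw [Real.cosh_sq']
    -- both sides nonneg; compare squares
    have hgx : (0:ℝ) ≤ (Real.sqrt (1 + (C * sx) ^ 2))⁻¹ * (C * (Real.cosh (x * t) * t)) := by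
      have := Real.cosh_pos (x := x * t)
      positivity
    have hgy : (0:ℝ) ≤ (Real.sqrt (1 + (C * sy) ^ 2))⁻¹ * (C * (Real.cosh (y * t) * t)) := by
      have := Real.cosh_pos (x := y * t)
      positivity
    have hsq2 : ((Real.sqrt (1 + (C * sy) ^ 2))⁻¹ * (C * (Real.cosh (y * t) * t))) ^ 2 ≤
        ((Real.sqrt (1 + (C * sx) ^ 2))⁻¹ * (C * (Real.cosh (x * t) * t))) ^ 2 := by
      have hAx := hA x
      have hAy := hA y
      have ex2 : ((Real.sqrt (1 + (C * sx) ^ 2))⁻¹) ^ 2 = (1 + (C * sx) ^ 2)⁻¹ := by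
        rw [inv_pow, Real.sq_sqrt hAx.le]
      have ey2 : ((Real.sqrt (1 + (C * sy) ^ 2))⁻¹) ^ 2 = (1 + (C * sy) ^ 2)⁻¹ := by
        rw [inv_pow, Real.sq_sqrt hAy.le]
      have hC1 : (0:ℝ) ≤ C ^ 2 - 1 := by nlinarith
      have hd : (0:ℝ) ≤ sy ^ 2 - sx ^ 2 := by linarith
      calc ((Real.sqrt (1 + (C * sy) ^ 2))⁻¹ * (C * (Real.cosh (y * t) * t))) ^ 2
          = ((Real.sqrt (1 + (C * sy) ^ 2))⁻¹) ^ 2 * (C * (Real.cosh (y * t) * t)) ^ 2 := by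
            ring
        _ = (C * (Real.cosh (y * t) * t)) ^ 2 / (1 + (C * sy) ^ 2) := by
            rw [ey2]; ring
        _ ≤ (C * (Real.cosh (x * t) * t)) ^ 2 / (1 + (C * sx) ^ 2) := by
            rw [div_le_div_iff₀ hAy hAx]
            simp only [hsx, hsy] at hcx hcy hsq hC1 hd ⊢
            have e1 : (C * (Real.cosh (x * t) * t)) ^ 2
                = C ^ 2 * t ^ 2 * (1 + Real.sinh (x * t) ^ 2) := by
              rw [mul_pow, mul_pow, hcx]; ring
            have e2 : (C * (Real.cosh (y * t) * t)) ^ 2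
                = C ^ 2 * t ^ 2 * (1 + Real.sinh (y * t) ^ 2) := by
              rw [mul_pow, mul_pow, hcy]; ring
            rw [e1, e2]
            nlinarith [mul_nonneg (mul_nonneg (sq_nonneg (C*t)) hC1) hd]
        _ = ((Real.sqrt (1 + (C * sx) ^ 2))⁻¹) ^ 2 * (C * (Real.cosh (x * t) * t)) ^ 2 := by
            rw [ex2]; ring
        _ = _ := by ring
    calc (Real.sqrt (1 + (C * sy) ^ 2))⁻¹ * (C * (Real.cosh (y * t) * t))
        = Real.sqrt (((Real.sqrt (1 + (C * sy) ^ 2))⁻¹ * (C * (Real.cosh (y * t) * t))) ^ 2) :=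
          (Real.sqrt_sq hgy).symm
      _ ≤ Real.sqrt (((Real.sqrt (1 + (C * sx) ^ 2))⁻¹ * (C * (Real.cosh (x * t) * t))) ^ 2) :=
          Real.sqrt_le_sqrt hsq2
      _ = _ := Real.sqrt_sq hgx
  exact hanti.concaveOn_of_deriv (convex_Ici 0)
    (Continuous.continuousOn (by continuity))
    (fun x _ => (hderiv x).differentiableAt.differentiableWithinAt)
end

section
/- Let C ≥ 1 and t > 0 be real numbers, let k ≥ 1 be an integer, and let α be a real number with 0 < α ≤ 1. Then arsinh(C·sinh((k + α)·t)) − arsinh(C·sinh(α·t)) ≥ arsinh(C·sinh(2t)) − arsinh(C·sinh(t)). -/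
/-!
For `C ≥ 1` the map `φ x = arsinh (C * sinh x)` is increasing and concave on `[0, ∞)`: its
derivative `C cosh x / √(1 + C² sinh² x)` decreases, because its square
`C² (1 + s) / (1 + C² s)` decreases in `s = sinh² x`. Concavity makes the increments of `φ` over
intervals of fixed length `t` shrink as the interval moves right, so
`φ (2t) - φ t ≤ φ (αt + t) - φ (αt)` since `αt ≤ t`, and monotonicity gives
`φ (αt + t) ≤ φ ((k + α) t)` since `k ≥ 1`.
-/

open Real Set

theorem ConcaveOn.map_add_sub_map_le_of_le {s : Set ℝ} {f : ℝ → ℝ} (hf : ConcaveOn ℝ s f)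
    {x y h : ℝ} (hx : x ∈ s) (hyh : y + h ∈ s) (hxy : x ≤ y) (hh : 0 ≤ h) :
    f (y + h) - f y ≤ f (x + h) - f x := by
  rcases hh.eq_or_lt with rfl | hh
  · simp
  -- `y` and `x + h` are the convex combinations of `x` and `y + h` with swapped weights.
  have hd : 0 < y - x + h := by linarith
  have ha : 0 ≤ h / (y - x + h) := by positivity
  have hb : 0 ≤ (y - x) / (y - x + h) := div_nonneg (sub_nonneg.2 hxy) hd.le
  have hab : h / (y - x + h) + (y - x) / (y - x + h) = 1 := by field_simp; ring
  have hy := hf.2 hx hyh ha hb hab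
  have hxh := hf.2 hx hyh hb ha (by rw [add_comm, hab])
  simp only [smul_eq_mul] at hy hxh
  rw [show h / (y - x + h) * x + (y - x) / (y - x + h) * (y + h) = y by field_simp; ring]
    at hy
  rw [show (y - x) / (y - x + h) * x + h / (y - x + h) * (y + h) = x + h by field_simp; ring]
    at hxh
  linear_combination hy + hxh - (f x + f (y + h)) * hab

theorem hasDerivAt_arsinh_mul_sinh (C x : ℝ) :
    HasDerivAt (fun x => arsinh (C * sinh x)) (C * cosh x / √(1 + (C * sinh x) ^ 2)) x := by
  convert ((hasDerivAt_sinh x).const_mul C).arsinh using 1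
  rw [smul_eq_mul, inv_mul_eq_div]

theorem antitoneOn_mul_cosh_div_sqrt {C : ℝ} (hC : 1 ≤ C) :
    AntitoneOn (fun x => C * cosh x / √(1 + (C * sinh x) ^ 2)) (Ici 0) := by
  intro x hx y _ hxy
  have hsx : 0 ≤ sinh x := sinh_nonneg_iff.2 hx
  have hsxy : sinh x ≤ sinh y := sinh_le_sinh.2 hxy
  have hpx : 0 < √(1 + (C * sinh x) ^ 2) := by positivity
  have hpy : 0 < √(1 + (C * sinh y) ^ 2) := by positivity
  dsimp only
  rw [div_le_div_iff₀ hpy hpx, ← pow_le_pow_iff_left₀ (by positivity) (by positivity) two_ne_zero]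
  simp only [mul_pow]
  rw [sq_sqrt (by positivity), sq_sqrt (by positivity), cosh_sq, cosh_sq]
  -- with `a = sinh² x ≤ b = sinh² y` this is `(C² - 1) (b - a) ≥ 0` after expanding
  have hsq : sinh x ^ 2 ≤ sinh y ^ 2 := pow_le_pow_left₀ hsx hsxy 2
  nlinarith [mul_nonneg (mul_nonneg (sq_nonneg C) (sub_nonneg.2 (one_le_pow₀ (n := 2) hC)))
    (sub_nonneg.2 hsq)]

theorem concaveOn_arsinh_mul_sinh_s13 {C : ℝ} (hC : 1 ≤ C) :
    ConcaveOn ℝ (Ici 0) (fun x => arsinh (C * sinh x)) := by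
  have hderiv : deriv (fun x => arsinh (C * sinh x)) =
      fun x => C * cosh x / √(1 + (C * sinh x) ^ 2) :=
    funext fun x => (hasDerivAt_arsinh_mul_sinh C x).deriv
  have hdiff : Differentiable ℝ (fun x => arsinh (C * sinh x)) :=
    fun x => (hasDerivAt_arsinh_mul_sinh C x).differentiableAt
  refine AntitoneOn.concaveOn_of_deriv (convex_Ici 0) hdiff.continuous.continuousOn
    hdiff.differentiableOn ?_
  rw [hderiv, interior_Ici]
  exact (antitoneOn_mul_cosh_div_sqrt hC).mono Ioi_subset_Ici_self

theorem arsinh_winding_difference_ge (C t : ℝ) (hC : 1 ≤ C) (ht : 0 < t)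
    (k : ℤ) (hk : 1 ≤ k) (α : ℝ) (hα : 0 < α) (hα' : α ≤ 1) :
    Real.arsinh (C * Real.sinh ((k + α) * t)) - Real.arsinh (C * Real.sinh (α * t)) ≥
      Real.arsinh (C * Real.sinh (2 * t)) - Real.arsinh (C * Real.sinh t) := by
  set f : ℝ → ℝ := fun x => arsinh (C * sinh x)
  have hstep : f (t + t) - f t ≤ f (α * t + t) - f (α * t) :=
    (concaveOn_arsinh_mul_sinh_s13 hC).map_add_sub_map_le_of_le (mem_Ici.2 (by positivity))
      (mem_Ici.2 (by positivity)) (mul_le_of_le_one_left ht.le hα') ht.le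
  have hk' : (1 : ℝ) ≤ k := by exact_mod_cast hk
  have hmono : f (α * t + t) ≤ f ((k + α) * t) :=
    arsinh_le_arsinh.2 <| mul_le_mul_of_nonneg_left (sinh_le_sinh.2 (by nlinarith)) (by linarith)
  rw [two_mul]
  exact le_trans hstep (by linarith)
end

section
/- For every real number T > 2, one has log(T/(T − 2)) + 2·log(T + sqrt(T^2 + 1)) > 2·log(5 + 2·sqrt 6). -/
theorem H_gt_critical (T : ℝ) (hT : 2 < T) :
    Real.log (T / (T - 2)) + 2 * Real.log (T + Real.sqrt (T ^ 2 + 1)) >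
      2 * Real.log (5 + 2 * Real.sqrt 6) := by
  set s := Real.sqrt (T ^ 2 + 1) with hs
  have hT0 : (0:ℝ) < T := by linarith
  have hT2 : (0:ℝ) < T - 2 := by linarith
  have hsT : T < s := by
    have : T = Real.sqrt (T ^ 2) := by
      rw [Real.sqrt_sq hT0.le]
    rw [this, hs]
    exact Real.sqrt_lt_sqrt (by positivity) (by linarith)
  have hs0 : 0 < s := lt_trans hT0 hsT
  have h6 : Real.sqrt 6 ^ 2 = 6 := Real.sq_sqrt (by norm_num)
  have h60 : 0 ≤ Real.sqrt 6 := Real.sqrt_nonneg 6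
  have hb : (0:ℝ) < 5 + 2 * Real.sqrt 6 := by positivity
  have hlhs : Real.log (T / (T - 2)) + 2 * Real.log (T + s)
      = Real.log (T / (T - 2) * (T + s) ^ 2) := by
    rw [Real.log_mul (by positivity) (by positivity), Real.log_pow]
    push_cast
    ring
  have hrhs : 2 * Real.log (5 + 2 * Real.sqrt 6)
      = Real.log ((5 + 2 * Real.sqrt 6) ^ 2) := by
    rw [Real.log_pow]; push_cast; ring
  rw [hlhs, hrhs]
  apply Real.log_lt_log (by positivity)
  have key : (5 + 2 * Real.sqrt 6) ^ 2 * (T - 2) < T * (T + s) ^ 2 := by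
    have h98 : (5 + 2 * Real.sqrt 6) ^ 2 ≤ 98 := by nlinarith
    have hcube : 98 * (T - 2) ≤ 4 * T ^ 3 := by nlinarith [sq_nonneg (T - 3), mul_nonneg (sq_nonneg (T - 3)) (by linarith : (0:ℝ) ≤ T + 6)]
    have hbig : 4 * T ^ 3 < T * (T + s) ^ 2 := by nlinarith [mul_pos hT0 (mul_pos hs0 hT0)]
    nlinarith
  rw [div_mul_eq_mul_div, lt_div_iff₀ hT2]
  linarith
end

section
/- For every real number T with 3 ≤ T ≤ 25/8, one has log(T/(T − 2)) + 2·log(T + sqrt(T^2 + 1)) ≥ log(25/9) + 2·log(3 + sqrt 10); moreover log(25/9) + 2·log(3 + sqrt 10) > 2·log(5 + 2·sqrt 6). -/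
theorem H_lower_bound_on_interval (T : ℝ) (hT : 3 ≤ T) (hT' : T ≤ 25 / 8) :
    Real.log (T / (T - 2)) + 2 * Real.log (T + Real.sqrt (T ^ 2 + 1)) ≥
        Real.log (25 / 9) + 2 * Real.log (3 + Real.sqrt 10) ∧
      Real.log (25 / 9) + 2 * Real.log (3 + Real.sqrt 10) >
        2 * Real.log (5 + 2 * Real.sqrt 6) := by
  have h10 : Real.sqrt 10 ^ 2 = 10 := Real.sq_sqrt (by norm_num)
  have h6 : Real.sqrt 6 ^ 2 = 6 := Real.sq_sqrt (by norm_num)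
  have h10p : 0 < Real.sqrt 10 := Real.sqrt_pos.2 (by norm_num)
  have h6p : 0 < Real.sqrt 6 := Real.sqrt_pos.2 (by norm_num)
  constructor
  · have h1 : Real.log (25 / 9) ≤ Real.log (T / (T - 2)) := by
      apply Real.log_le_log (by norm_num)
      rw [le_div_iff₀ (by linarith)]
      linarith
    have h2 : Real.log (3 + Real.sqrt 10) ≤ Real.log (T + Real.sqrt (T ^ 2 + 1)) := by
      apply Real.log_le_log (by positivity)
      have : Real.sqrt 10 ≤ Real.sqrt (T ^ 2 + 1) := Real.sqrt_le_sqrt (by nlinarith)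
      linarith
    linarith
  · have e1 : Real.log (25 / 9) + 2 * Real.log (3 + Real.sqrt 10)
        = Real.log ((25 / 9) * (3 + Real.sqrt 10) ^ 2) := by
      rw [Real.log_mul (by norm_num) (by positivity), Real.log_pow]; push_cast; ring
    have e2 : 2 * Real.log (5 + 2 * Real.sqrt 6) = Real.log ((5 + 2 * Real.sqrt 6) ^ 2) := by
      rw [Real.log_pow]; push_cast; ring
    rw [e1, e2]
    apply Real.log_lt_log (by positivity)
    have s6 : Real.sqrt 6 < 2.45 := by nlinarith
    have s10 : (3.16 : ℝ) < Real.sqrt 10 := by nlinarith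
    nlinarith
end

section
/- For every real number α with 0 < α ≤ 1 and every integer k ≥ 1, one has arsinh(2·(k + α)) − arsinh(2·α) ≥ arsinh(4) − arsinh(2). -/
/-!
For `c ≥ 0` the increment `s ↦ arsinh (s + c) - arsinh s` is antitone on `[-c/2, ∞)`, since
`arsinh' t = (1 + t²)^(-1/2)` and `|t + c| ≥ |t|` there. Hence unwinding the `k` full turns only
lowers `arsinh (2 (k + α))` to `arsinh (2 α + 2)`, and the increment over `[2α, 2α + 2]` is
smallest at the right end `2α = 2`.
-/

open Real

lemma hasDerivAt_arsinh_add_sub_arsinh (c t : ℝ) :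
    HasDerivAt (fun s => arsinh (s + c) - arsinh s)
      ((√(1 + (t + c) ^ 2))⁻¹ - (√(1 + t ^ 2))⁻¹) t :=
  ((hasDerivAt_arsinh (t + c)).comp_add_const t c).sub (hasDerivAt_arsinh t)

lemma antitoneOn_arsinh_add_sub_arsinh {c : ℝ} (hc : 0 ≤ c) :
    AntitoneOn (fun s => arsinh (s + c) - arsinh s) (Set.Ici (-c / 2)) := by
  apply antitoneOn_of_deriv_nonpos (convex_Ici _)
  · exact ((continuous_arsinh.comp (continuous_add_const c)).sub continuous_arsinh).continuousOn
  · exact fun t _ => (hasDerivAt_arsinh_add_sub_arsinh c t).differentiableAt.differentiableWithinAt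
  · intro t ht
    rw [interior_Ici, Set.mem_Ioi] at ht
    rw [(hasDerivAt_arsinh_add_sub_arsinh c t).deriv, sub_nonpos]
    have hsq : t ^ 2 ≤ (t + c) ^ 2 := by nlinarith
    exact inv_anti₀ (by positivity) (sqrt_le_sqrt (by linarith))

theorem arsinh_cusp_winding_difference_ge (α : ℝ) (hα : 0 < α) (hα' : α ≤ 1)
    (k : ℤ) (hk : 1 ≤ k) :
    Real.arsinh (2 * (k + α)) - Real.arsinh (2 * α) ≥
      Real.arsinh 4 - Real.arsinh 2 := by
  have hk1 : (1 : ℝ) ≤ k := by exact_mod_cast hk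
  have hgap : arsinh (2 + 2) - arsinh 2 ≤ arsinh (2 * α + 2) - arsinh (2 * α) :=
    antitoneOn_arsinh_add_sub_arsinh zero_le_two
      (by rw [Set.mem_Ici]; linarith) (by norm_num) (by linarith)
  calc arsinh 4 - arsinh 2 = arsinh (2 + 2) - arsinh 2 := by norm_num
    _ ≤ arsinh (2 * α + 2) - arsinh (2 * α) := hgap
    _ ≤ arsinh (2 * (k + α)) - arsinh (2 * α) :=
      sub_le_sub_right (arsinh_le_arsinh.2 (by linarith)) _
end
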